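/- arXiv:1912.01074 — 3 statements merged into one kernel-verified Lean document; each statement's English description precedes it below -/
import Mathlib

section
/- Let v, v̂ be in the closed unit ball of ℝ³ and F(v, v̂) = (1/2)(1 + v·v̂ + √((1 − ‖v‖²)(1 − ‖v̂‖²))). Then F(v, v̂) = 1 if and only if v = v̂. -/
noncomputable def blochFidelity (x y z xh yh zh : ℝ) : ℝ :=
  (1 / 2) * (1 + (x * xh + y * yh + z * zh)
    + Real.sqrt ((1 - (x ^ 2 + y ^ 2 + z ^ 2)) * (1 - (xh ^ 2 + yh ^ 2 + zh ^ 2))))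

theorem fidelity_eq_one_iff (x y z xh yh zh : ℝ)
    (h : x ^ 2 + y ^ 2 + z ^ 2 ≤ 1) (hh : xh ^ 2 + yh ^ 2 + zh ^ 2 ≤ 1) :
    blochFidelity x y z xh yh zh = 1 ↔ (x = xh ∧ y = yh ∧ z = zh) := by
  have ha : 0 ≤ 1 - (x ^ 2 + y ^ 2 + z ^ 2) := by linarith
  have hb : 0 ≤ 1 - (xh ^ 2 + yh ^ 2 + zh ^ 2) := by linarith
  have hst : Real.sqrt ((1 - (x ^ 2 + y ^ 2 + z ^ 2)) * (1 - (xh ^ 2 + yh ^ 2 + zh ^ 2)))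
      = Real.sqrt (1 - (x ^ 2 + y ^ 2 + z ^ 2)) * Real.sqrt (1 - (xh ^ 2 + yh ^ 2 + zh ^ 2)) :=
    Real.sqrt_mul ha _
  have hs2 : (Real.sqrt (1 - (x ^ 2 + y ^ 2 + z ^ 2))) ^ 2 = 1 - (x ^ 2 + y ^ 2 + z ^ 2) :=
    Real.sq_sqrt ha
  have ht2 : (Real.sqrt (1 - (xh ^ 2 + yh ^ 2 + zh ^ 2))) ^ 2 = 1 - (xh ^ 2 + yh ^ 2 + zh ^ 2) :=
    Real.sq_sqrt hb
  set s := Real.sqrt (1 - (x ^ 2 + y ^ 2 + z ^ 2))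
  set t := Real.sqrt (1 - (xh ^ 2 + yh ^ 2 + zh ^ 2))
  unfold blochFidelity
  rw [hst]
  constructor
  · intro hF
    refine ⟨?_, ?_, ?_⟩ <;>
      nlinarith [sq_nonneg (x - xh), sq_nonneg (y - yh), sq_nonneg (z - zh), sq_nonneg (s - t)]
  · rintro ⟨rfl, rfl, rfl⟩
    have : s = t := rfl
    nlinarith [this, hs2]
end

section
/- Let v = (x,y,z) and v̂ = (x̂,ŷ,ẑ) be in the open unit ball of ℝ³ and set Ξ = √((1 − ‖v‖²)(1 − ‖v̂‖²)). Then (1/(2Ξ))·((1 − ẑ²)(1 − ‖v‖²) + (1 − z²)(1 − ‖v̂‖²)) + zẑ − v·v̂ − Ξ ≥ (1/(2Ξ))·(√((‖v̂‖² − ẑ²)(1 − ‖v‖²)) − √((‖v‖² − z²)(1 − ‖v̂‖²)))², and in particular this quantity is nonnegative. -/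
private lemma gen_aux (x y z xh yh zh Ξ SP SQ S : ℝ)
    (hΞ0 : 0 < Ξ)
    (hΞ2 : Ξ ^ 2 = (1 - (x ^ 2 + y ^ 2 + z ^ 2)) * (1 - (xh ^ 2 + yh ^ 2 + zh ^ 2)))
    (hSP2 : SP ^ 2 = (xh ^ 2 + yh ^ 2) * (1 - (x ^ 2 + y ^ 2 + z ^ 2)))
    (hSQ2 : SQ ^ 2 = (x ^ 2 + y ^ 2) * (1 - (xh ^ 2 + yh ^ 2 + zh ^ 2)))
    (hprod : SP * SQ = S * Ξ)
    (hcs : x * xh + y * yh ≤ S) :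
    (1 / (2 * Ξ)) * ((1 - zh ^ 2) * (1 - (x ^ 2 + y ^ 2 + z ^ 2))
        + (1 - z ^ 2) * (1 - (xh ^ 2 + yh ^ 2 + zh ^ 2)))
      + z * zh - (x * xh + y * yh + z * zh) - Ξ
    ≥ (1 / (2 * Ξ)) * (SP - SQ) ^ 2 ∧
    0 ≤ (1 / (2 * Ξ)) * ((1 - zh ^ 2) * (1 - (x ^ 2 + y ^ 2 + z ^ 2))
        + (1 - z ^ 2) * (1 - (xh ^ 2 + yh ^ 2 + zh ^ 2)))
      + z * zh - (x * xh + y * yh + z * zh) - Ξ := by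
  have hne : Ξ ≠ 0 := ne_of_gt hΞ0
  have key : (1 / (2 * Ξ)) * ((1 - zh ^ 2) * (1 - (x ^ 2 + y ^ 2 + z ^ 2))
        + (1 - z ^ 2) * (1 - (xh ^ 2 + yh ^ 2 + zh ^ 2)))
      + z * zh - (x * xh + y * yh + z * zh) - Ξ
      - (1 / (2 * Ξ)) * (SP - SQ) ^ 2 = S - (x * xh + y * yh) := by
    field_simp
    linear_combination (-(2:ℝ)) * hΞ2 - hSP2 - hSQ2 + 2 * hprod
  have hrhs : 0 ≤ (1 / (2 * Ξ)) * (SP - SQ) ^ 2 := by positivity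
  constructor
  · linarith
  · linarith

theorem generator_inequality_eta_zero (x y z xh yh zh : ℝ)
    (h : x ^ 2 + y ^ 2 + z ^ 2 < 1) (hh : xh ^ 2 + yh ^ 2 + zh ^ 2 < 1) :
    let Ξ := Real.sqrt ((1 - (x ^ 2 + y ^ 2 + z ^ 2)) * (1 - (xh ^ 2 + yh ^ 2 + zh ^ 2)))
    (1 / (2 * Ξ)) * ((1 - zh ^ 2) * (1 - (x ^ 2 + y ^ 2 + z ^ 2))
        + (1 - z ^ 2) * (1 - (xh ^ 2 + yh ^ 2 + zh ^ 2)))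
      + z * zh - (x * xh + y * yh + z * zh) - Ξ
    ≥ (1 / (2 * Ξ)) * (Real.sqrt ((xh ^ 2 + yh ^ 2 + zh ^ 2 - zh ^ 2) * (1 - (x ^ 2 + y ^ 2 + z ^ 2)))
        - Real.sqrt ((x ^ 2 + y ^ 2 + z ^ 2 - z ^ 2) * (1 - (xh ^ 2 + yh ^ 2 + zh ^ 2)))) ^ 2 ∧
    0 ≤ (1 / (2 * Ξ)) * ((1 - zh ^ 2) * (1 - (x ^ 2 + y ^ 2 + z ^ 2))
        + (1 - z ^ 2) * (1 - (xh ^ 2 + yh ^ 2 + zh ^ 2)))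
      + z * zh - (x * xh + y * yh + z * zh) - Ξ := by
  have hA0 : (0:ℝ) < 1 - (x ^ 2 + y ^ 2 + z ^ 2) := by linarith
  have hB0 : (0:ℝ) < 1 - (xh ^ 2 + yh ^ 2 + zh ^ 2) := by linarith
  have e1 : xh ^ 2 + yh ^ 2 + zh ^ 2 - zh ^ 2 = xh ^ 2 + yh ^ 2 := by ring
  have e2 : x ^ 2 + y ^ 2 + z ^ 2 - z ^ 2 = x ^ 2 + y ^ 2 := by ring
  rw [e1, e2]
  refine gen_aux x y z xh yh zh _ _ _ (Real.sqrt ((xh ^ 2 + yh ^ 2) * (x ^ 2 + y ^ 2)))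
    (Real.sqrt_pos.mpr (by positivity)) (Real.sq_sqrt (by positivity))
    (Real.sq_sqrt (by positivity)) (Real.sq_sqrt (by positivity)) ?_ ?_
  · rw [← Real.sqrt_mul (by positivity), ← Real.sqrt_mul (by positivity)]
    ring_nf
  · have h1 : (x * xh + y * yh) ^ 2 ≤ (xh ^ 2 + yh ^ 2) * (x ^ 2 + y ^ 2) := by
      nlinarith [sq_nonneg (x * yh - y * xh)]
    have hS0 : 0 ≤ Real.sqrt ((xh ^ 2 + yh ^ 2) * (x ^ 2 + y ^ 2)) := Real.sqrt_nonneg _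
    have hS2 : Real.sqrt ((xh ^ 2 + yh ^ 2) * (x ^ 2 + y ^ 2)) ^ 2
        = (xh ^ 2 + yh ^ 2) * (x ^ 2 + y ^ 2) := Real.sq_sqrt (by positivity)
    nlinarith [hS0, hS2, h1]
end

section
/- For the spin-1/2 Bloch dynamics, the drift of the purification function S(v) = 1 − (1 + ‖v‖²)/2 = (1 − x² − y² − z²)/2 under the SDE dx = (−ωy − (M/2)x + uz)dt − √(ηM)xz dW, dy = (ωx − (M/2)y)dt − √(ηM)yz dW, dz = −ux dt + √(ηM)(1 − z²)dW equals M((1−η)(1−z²)/2 − (1 − ηz²)S(v)); in particular it does not depend on the control u or on ω. -/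
theorem purification_drift (x y z ω u M η : ℝ) (hM : 0 < M) (hη : η ∈ Set.Icc (0 : ℝ) 1)
    (hv : x ^ 2 + y ^ 2 + z ^ 2 ≤ 1) :
    let S := (1 - (x ^ 2 + y ^ 2 + z ^ 2)) / 2
    let bx := -ω * y - (M / 2) * x + u * z
    let by' := ω * x - (M / 2) * y
    let bz := -u * x
    let sx := -Real.sqrt (η * M) * x * z
    let sy := -Real.sqrt (η * M) * y * z
    let sz := Real.sqrt (η * M) * (1 - z ^ 2)
    -- generator ∇S·b + (1/2)σᵀ(Hess S)σ with ∇S = (−x,−y,−z), Hess S = −I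
    (-x) * bx + (-y) * by' + (-z) * bz - (1 / 2) * (sx ^ 2 + sy ^ 2 + sz ^ 2)
      = M * ((1 - η) * (1 - z ^ 2) / 2 - (1 - η * z ^ 2) * S) := by
  have hs : Real.sqrt (η * M) ^ 2 = η * M :=
    Real.sq_sqrt (mul_nonneg hη.1 hM.le)
  intro S bx by' bz sx sy sz
  simp only [S, bx, by', bz, sx, sy, sz]
  linear_combination (-(1/2) * (x^2*z^2 + y^2*z^2 + (1-z^2)^2)) * hs
end
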